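/- arXiv:1710.06993 — 3 statements merged into one kernel-verified Lean document; each statement's English description precedes it below -/
import Mathlib

section
/- Let d₁, …, d_m be natural numbers with d₁ + ⋯ + d_m ≤ m * r' + a where 0 ≤ a < m. Then either there exists j ≤ a + 1 with d_j ≤ r', or there exists j > a + 1 with d_j ≤ r' - 1 (i.e., d_j < r'). In particular, if the first a+1 values all exceed r', then some later value is strictly less than r'. -/
/-- Refined pigeonhole of multi-index hashing: if `∑ d_j ≤ m * r' + a` with `a < m`,
then either some of the first `a + 1` values is at most `r'`, or some later value is
strictly less than `r'`; in particular, if the first `a + 1` values all exceed `r'`,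
then some later value is strictly less than `r'`. -/
theorem mih_refined_pigeonhole (m r' a : ℕ) (hm : 1 ≤ m) (hr' : 1 ≤ r') (ha : a < m)
    (d : Fin m → ℕ) (hsum : ∑ j : Fin m, d j ≤ m * r' + a) :
    ((∃ j : Fin m, j.val < a + 1 ∧ d j ≤ r') ∨
      (∃ j : Fin m, a + 1 ≤ j.val ∧ d j < r')) ∧
    ((∀ j : Fin m, j.val < a + 1 → r' < d j) →
      ∃ j : Fin m, a + 1 ≤ j.val ∧ d j < r') := by
  have key : (∀ j : Fin m, j.val < a + 1 → r' < d j) →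
      ∃ j : Fin m, a + 1 ≤ j.val ∧ d j < r' := by
    intro hfirst
    by_contra h
    push_neg at h
    have hge : ∀ j : Fin m, r' + (if j.val < a + 1 then 1 else 0) ≤ d j := by
      intro j
      by_cases hj : j.val < a + 1
      · simp [hj]; exact hfirst j hj
      · simp [hj]; exact h j (le_of_not_gt hj)
    have hsum2 : ∑ j : Fin m, (r' + (if j.val < a + 1 then 1 else 0)) ≤ ∑ j : Fin m, d j :=
      Finset.sum_le_sum fun j _ => hge j
    rw [Finset.sum_add_distrib] at hsum2
    have ham : a + 1 ≤ m := ha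
    have hcard : (∑ j : Fin m, if j.val < a + 1 then 1 else 0) = a + 1 := by
      rw [← Finset.card_filter]
      have himg : Finset.univ.filter (fun j : Fin m => j.val < a + 1)
          = Finset.image (Fin.castLE ham) Finset.univ := by
        ext j
        simp only [Finset.mem_filter, Finset.mem_univ, true_and, Finset.mem_image]
        constructor
        · intro hj
          exact ⟨⟨j.val, hj⟩, Fin.ext rfl⟩
        · rintro ⟨k, rfl⟩
          exact k.isLt
      rw [himg, Finset.card_image_of_injective _ (Fin.castLE_injective ham)]
      simp
    have hconst : (∑ _x : Fin m, r') = m * r' := by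
      simp [Finset.sum_const, mul_comm]
    omega
  refine ⟨?_, key⟩
  by_cases hfirst : ∀ j : Fin m, j.val < a + 1 → r' < d j
  · exact Or.inr (key hfirst)
  · push_neg at hfirst
    obtain ⟨j, hj1, hj2⟩ := hfirst
    exact Or.inl ⟨j, hj1, hj2⟩
end

section
/- Let q and h be codes of length l = m*s partitioned into m substrings, and suppose that for every code h in the database with full Hamming distance exactly r = m*r' + a to q (with 0 ≤ a < m), the first a substrings each differ from q's in exactly r'+1 bits and the remaining m-a substrings each differ in exactly r' bits. Then every database code lying in ⋃_{i=1}^{a+1} N_i^{r'}(q) has full Hamming distance at most r to q; that is, the candidate set contains no false positives: ⋃_{i=1}^{a+1} N_i^{r'}(q) \ R^r(q) = ∅. -/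
/-- The index of the `i`-th coordinate of the `j`-th substring (of length `s`)
of a binary code of length `m * s`. -/
def subIdx {m s : ℕ} (j : Fin m) (i : Fin s) : Fin (m * s) :=
  ⟨j.val * s + i.val, by
    have hj := j.isLt
    have hi := i.isLt
    calc j.val * s + i.val < j.val * s + s := by omega
      _ = (j.val + 1) * s := by ring
      _ ≤ m * s := Nat.mul_le_mul_right s hj⟩

/-- Hamming distance between the `j`-th substrings of two codes of length `m * s`. -/
def subDist {m s : ℕ} (h q : Fin (m * s) → Bool) (j : Fin m) : ℕ :=
  hammingDist (fun i : Fin s => h (subIdx j i)) (fun i : Fin s => q (subIdx j i))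

/-- Proposition 2: under the uniformity hypothesis (for every database code at full
distance `m * r' + a` from the query, the first `a` substrings differ in exactly
`r' + 1` bits and the remaining `m - a` substrings in exactly `r'` bits), the
candidate set `⋃_{i=1}^{a+1} N_i^{r'}(q)` contains no false positives: every code in
it has full Hamming distance at most `r = m * r' + a` to the query. -/
theorem no_false_positives (m s : ℕ) (q : Fin (m * s) → Bool)
    (D : Finset (Fin (m * s) → Bool))
    (huniform : ∀ h ∈ D, ∀ r' a : ℕ, a < m → hammingDist h q = m * r' + a →
      ∀ i : Fin m, (i.val < a → subDist h q i = r' + 1) ∧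
        (a ≤ i.val → subDist h q i = r')) :
    ∀ r' a : ℕ, a < m →
      ∀ h ∈ D, (∃ i : Fin m, i.val < a + 1 ∧ subDist h q i ≤ r') →
        hammingDist h q ≤ m * r' + a := by
  intro r' a ha h hD ⟨i, hi, hsub⟩
  have hm : 0 < m := by omega
  set d := hammingDist h q with hdef
  have hA : d % m < m := Nat.mod_lt _ hm
  have hd : d = m * (d / m) + d % m := (Nat.div_add_mod d m).symm
  obtain ⟨hu1, hu2⟩ := huniform h hD (d / m) (d % m) hA hd i
  by_cases hc : i.val < d % m
  · have h1 := hu1 hc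
    have hle : d / m + 1 ≤ r' := by omega
    have h2 : m * (d / m + 1) ≤ m * r' := Nat.mul_le_mul_left m hle
    have h3 : m * (d / m + 1) = m * (d / m) + m := by ring
    omega
  · have h1 := hu2 (le_of_not_gt hc)
    have hle : d / m ≤ r' := by omega
    have h2 : m * (d / m) ≤ m * r' := Nat.mul_le_mul_left m hle
    omega
end

section
/- Let q be a query and D a database of codes of length l = m*s. For any r' ≥ 0, the union of candidate sets ⋃_{i=1}^{m} N_i^{r'}(q) contains R^{r}(q) for every r with r ≤ m*r' + m - 1; equivalently, searching all m substring tables with radius r' retrieves all r-neighbors for every r < (r'+1)*m. -/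
/-- Splitting the Hamming distance across the `m` substrings. -/
lemma sum_subDist {m s : ℕ} (h q : Fin (m * s) → Bool) :
    ∑ j : Fin m, subDist h q j = hammingDist h q := by
  classical
  simp only [subDist, hammingDist, Finset.card_filter]
  rw [← Finset.sum_product']
  have hs : ∀ k : Fin (m * s), 0 < s := fun k => by
    have hms : 0 < m * s := (Nat.zero_le _).trans_lt k.isLt
    exact Nat.pos_of_ne_zero fun h0 => by simp [h0] at hms
  refine Finset.sum_nbij' (fun p => subIdx p.1 p.2)
    (fun k => (⟨k.val / s, Nat.div_lt_of_lt_mul (lt_of_lt_of_eq k.isLt (Nat.mul_comm m s))⟩,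
               ⟨k.val % s, Nat.mod_lt _ (hs k)⟩)) ?_ ?_ ?_ ?_ ?_
  · intros; simp
  · intros; simp
  · intro p _
    have hs' : 0 < s := p.2.pos
    ext
    · simp [subIdx, Nat.mul_comm _ s, Nat.mul_add_div hs', Nat.div_eq_of_lt p.2.isLt]
    · simp [subIdx, Nat.mul_comm _ s, Nat.mul_add_mod, Nat.mod_eq_of_lt p.2.isLt]
  · intro k _
    simp only [subIdx, Fin.ext_iff]
    exact Nat.div_add_mod' _ _
  · intros; rfl

/-- Correctness of multi-index hashing: searching all `m` substring tables with
radius `r'` retrieves every `r`-neighbor of the query for all `r ≤ m * r' + m - 1`. -/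
theorem mih_search_correct (m s : ℕ) (hm : 1 ≤ m) (q : Fin (m * s) → Bool)
    (D : Finset (Fin (m * s) → Bool)) :
    ∀ r' r : ℕ, r ≤ m * r' + m - 1 →
      ∀ h ∈ D, hammingDist h q ≤ r → ∃ i : Fin m, subDist h q i ≤ r' := by
  intro r' r hr h _ hdist
  by_contra hcon
  push_neg at hcon
  have hsum : m * (r' + 1) ≤ ∑ j : Fin m, subDist h q j := by
    calc m * (r' + 1) = ∑ _j : Fin m, (r' + 1) := by
          simp [Finset.sum_const, Nat.mul_comm]
      _ ≤ ∑ j : Fin m, subDist h q j :=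
          Finset.sum_le_sum fun j _ => hcon j
  rw [sum_subDist] at hsum
  have hmr : m * (r' + 1) = m * r' + m := by ring
  omega
end
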